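/- arXiv:2412.12996 — 2 statements merged into one kernel-verified Lean document; each statement's English description precedes it below -/
import Mathlib

section
/- Let V : ℝⁿ → ℝ be continuous with V(x) > 0 for x ∉ X_g and V = 0 on X_g, and let x(t) be a trajectory such that t ↦ V(x(t)) is differentiable with (d/dt)V(x(t)) ≤ -α(V(x(t))) for a continuous, strictly increasing function α : ℝ≥0 → ℝ≥0 with α(0) = 0, where additionally V(x(t)) → 0 implies dist(x(t), X_g) → 0. Then lim_{t→∞} dist(x(t), X_g) = 0. -/
/-!
Along the trajectory `f t = V (x t)` is nonnegative and, since `f' ≤ -α ∘ f ≤ 0`, nonincreasing.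
If `f` stayed above some `ε > 0` it would decrease at rate at least `α ε > 0` forever, which is
impossible for a nonnegative function; so `f` eventually drops below every `ε > 0` and stays there.
-/

open Set Filter Topology

theorem exists_lt_of_deriv_le_neg {f : ℝ → ℝ} (hf : Differentiable ℝ f) {ε c : ℝ} (hc : 0 < c)
    (hderiv : ∀ t, 0 ≤ t → ε ≤ f t → deriv f t ≤ -c) : ∃ T, 0 ≤ T ∧ f T < ε := by
  by_contra! hge
  have hdrop : ∀ T, 0 ≤ T → f T - f 0 ≤ -c * (T - 0) := fun T hT =>
    (convex_Ici 0).image_sub_le_mul_sub_of_deriv_le hf.continuous.continuousOn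
      hf.differentiableOn (fun t ht => hderiv t (le_of_lt <| by simpa using ht)
        (hge t (le_of_lt <| by simpa using ht))) 0 self_mem_Ici T hT hT
  set T := (f 0 - ε) / c + 1
  have hT : 0 ≤ T := by
    have := hge 0 le_rfl
    positivity
  have hcT : c * T = f 0 - ε + c := by
    simp only [T]
    field_simp
  linarith [hdrop T hT, hge T hT]

theorem tendsto_zero_of_deriv_le_neg_comp {f α : ℝ → ℝ} (hf : Differentiable ℝ f)
    (hf_nonneg : ∀ t, 0 ≤ f t) (hα : StrictMonoOn α (Ici 0)) (hα0 : α 0 = 0)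
    (hdec : ∀ t, 0 ≤ t → deriv f t ≤ -α (f t)) : Tendsto f atTop (𝓝 0) := by
  have hα_nonneg : ∀ r, 0 ≤ r → 0 ≤ α r := fun r hr =>
    hα0 ▸ hα.monotoneOn self_mem_Ici hr hr
  have hanti : AntitoneOn f (Ici 0) :=
    antitoneOn_of_deriv_nonpos (convex_Ici 0) hf.continuous.continuousOn hf.differentiableOn
      fun t ht => (hdec t (le_of_lt <| by simpa using ht)).trans
        (neg_nonpos.2 (hα_nonneg _ (hf_nonneg t)))
  refine tendsto_order.2 ⟨fun a ha => Eventually.of_forall fun t => ha.trans_le (hf_nonneg t),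
    fun ε hε => ?_⟩
  have hαε : 0 < α ε := hα0 ▸ hα self_mem_Ici hε.le hε
  obtain ⟨T, hT, hfT⟩ := exists_lt_of_deriv_le_neg hf hαε fun t ht hεt =>
    (hdec t ht).trans (neg_le_neg (hα.monotoneOn hε.le (hε.le.trans hεt) hεt))
  filter_upwards [eventually_ge_atTop T] with t ht
  exact (hanti hT (hT.trans ht) ht).trans_lt hfT

theorem stmt_4_general {n : ℕ} (Xg : Set (EuclideanSpace ℝ (Fin n)))
    (V : EuclideanSpace ℝ (Fin n) → ℝ)
    (hpos : ∀ y, y ∉ Xg → 0 < V y) (hzero : ∀ y ∈ Xg, V y = 0)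
    (x : ℝ → EuclideanSpace ℝ (Fin n))
    (hdiff : Differentiable ℝ (fun t => V (x t)))
    (α : ℝ → ℝ) (hαmono : StrictMonoOn α (Set.Ici 0))
    (hα0 : α 0 = 0)
    (hdec : ∀ t, 0 ≤ t → deriv (fun s => V (x s)) t ≤ -α (V (x t)))
    (himp : Filter.Tendsto (fun t => V (x t)) Filter.atTop (nhds 0) →
      Filter.Tendsto (fun t => Metric.infDist (x t) Xg) Filter.atTop (nhds 0)) :
    Filter.Tendsto (fun t => Metric.infDist (x t) Xg) Filter.atTop (nhds 0) := by
  have hV_nonneg : ∀ y, 0 ≤ V y := fun y => by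
    by_cases hy : y ∈ Xg
    · exact (hzero y hy).ge
    · exact (hpos y hy).le
  exact himp (tendsto_zero_of_deriv_le_neg_comp hdiff (fun t => hV_nonneg (x t)) hαmono hα0 hdec)

/-- Lyapunov stability certificate (Proposition 2): the decreasing condition along the
trajectory forces `V (x t) → 0` and hence `dist (x t, X_g) → 0`. -/
theorem stmt_4 {n : ℕ} (Xg : Set (EuclideanSpace ℝ (Fin n))) (hXg : IsClosed Xg)
    (V : EuclideanSpace ℝ (Fin n) → ℝ) (hV : Continuous V)
    (hpos : ∀ y, y ∉ Xg → 0 < V y) (hzero : ∀ y ∈ Xg, V y = 0)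
    (x : ℝ → EuclideanSpace ℝ (Fin n))
    (hdiff : Differentiable ℝ (fun t => V (x t)))
    (α : ℝ → ℝ) (hαcont : Continuous α) (hαmono : StrictMonoOn α (Set.Ici 0))
    (hα0 : α 0 = 0) (hαnonneg : ∀ r, 0 ≤ r → 0 ≤ α r)
    (hdec : ∀ t, 0 ≤ t → deriv (fun s => V (x s)) t ≤ -α (V (x t)))
    (himp : Filter.Tendsto (fun t => V (x t)) Filter.atTop (nhds 0) →
      Filter.Tendsto (fun t => Metric.infDist (x t) Xg) Filter.atTop (nhds 0)) :
    Filter.Tendsto (fun t => Metric.infDist (x t) Xg) Filter.atTop (nhds 0) :=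
  stmt_4_general Xg V hpos hzero x hdiff α hαmono hα0 hdec himp
end

section
/- Let g : ℝ≥0 → ℝ≥0 be differentiable with g'(t) ≤ -α(g(t)) for all t, where α : ℝ≥0 → ℝ≥0 is continuous, strictly increasing, and α(0) = 0. Then g(t) → 0 as t → ∞. -/
/-!
Since `α ≥ α 0 = 0` on `[0, ∞)`, `g` is nonincreasing there, so it suffices that `g` eventually drops
below every `ε > 0`. If instead `g ≥ ε` on `[0, ∞)`, then `g' ≤ -α (g t) ≤ -α ε < 0` there, and a
function bounded below cannot decrease at a uniform positive rate forever.
-/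

open Filter Set Topology

theorem image_sub_le_mul_sub_of_deriv_le_Ici {f : ℝ → ℝ} (hf : Differentiable ℝ f) {a C : ℝ}
    (hC : ∀ t, a ≤ t → deriv f t ≤ C) {x y : ℝ} (hx : a ≤ x) (hxy : x ≤ y) :
    f y - f x ≤ C * (y - x) :=
  (convex_Ici a).image_sub_le_mul_sub_of_deriv_le hf.continuous.continuousOn hf.differentiableOn
    (fun t ht => hC t (interior_subset ht)) x hx y (hx.trans hxy) hxy

theorem exists_neg_lt_deriv_of_forall_le {f : ℝ → ℝ} (hf : Differentiable ℝ f) {a c m : ℝ}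
    (hc : 0 < c) (hm : ∀ t, a ≤ t → m ≤ f t) : ∃ t, a ≤ t ∧ -c < deriv f t := by
  by_contra! hderiv
  set T := a + (f a - m) / c + 1
  have hfa : 0 ≤ f a - m := sub_nonneg.2 (hm a le_rfl)
  have haT : a ≤ T := by
    have : 0 ≤ (f a - m) / c := div_nonneg hfa hc.le
    linarith
  have hdrop := image_sub_le_mul_sub_of_deriv_le_Ici hf hderiv le_rfl haT
  have hT : c * (T - a) = f a - m + c := by
    simp only [T]
    field_simp
    ring
  linarith [hm T haT]

theorem tendsto_nhds_zero_of_antitoneOn_Ici {g : ℝ → ℝ} {a : ℝ} (hanti : AntitoneOn g (Ici a))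
    (hnonneg : ∀ t, a ≤ t → 0 ≤ g t) (hsmall : ∀ ε > 0, ∃ t, a ≤ t ∧ g t < ε) :
    Tendsto g atTop (𝓝 0) := by
  refine tendsto_order.2 ⟨fun b hb => ?_, fun ε hε => ?_⟩
  · filter_upwards [eventually_ge_atTop a] with t ht using hb.trans_le (hnonneg t ht)
  · obtain ⟨t₀, ht₀, hlt⟩ := hsmall ε hε
    filter_upwards [eventually_ge_atTop t₀] with t ht
    exact (hanti ht₀ (ht₀.trans ht) ht).trans_lt hlt

theorem stmt_5_general (g : ℝ → ℝ) (hg : Differentiable ℝ g)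
    (hnonneg : ∀ t, 0 ≤ t → 0 ≤ g t)
    (α : ℝ → ℝ) (hαmono : StrictMonoOn α (Set.Ici 0))
    (hα0 : α 0 = 0)
    (hdec : ∀ t, 0 ≤ t → deriv g t ≤ -α (g t)) :
    Filter.Tendsto g Filter.atTop (nhds 0) := by
  have hα_mono : MonotoneOn α (Ici 0) := hαmono.monotoneOn
  have hα_nonneg : ∀ t, 0 ≤ t → 0 ≤ α (g t) := fun t ht =>
    hα0 ▸ hα_mono self_mem_Ici (hnonneg t ht) (hnonneg t ht)
  have hanti : AntitoneOn g (Ici 0) :=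
    antitoneOn_of_deriv_nonpos (convex_Ici 0) hg.continuous.continuousOn hg.differentiableOn
      fun t ht => (hdec t (interior_subset ht)).trans (neg_nonpos.2 (hα_nonneg t (interior_subset ht)))
  refine tendsto_nhds_zero_of_antitoneOn_Ici hanti hnonneg fun ε hε => ?_
  by_contra! hbig
  have hαε : 0 < α ε := hα0 ▸ hαmono self_mem_Ici hε.le hε
  obtain ⟨t, ht, hslow⟩ := exists_neg_lt_deriv_of_forall_le hg hαε hnonneg
  have hαg : α ε ≤ α (g t) := hα_mono hε.le (hnonneg t ht) (hbig t ht)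
  linarith [hdec t ht]

/-- Scalar Lyapunov decrease: if `g ≥ 0` is differentiable with `g' t ≤ -α (g t)` where
`α` is continuous, strictly increasing on `[0,∞)` with `α 0 = 0` and `α ≥ 0` on `[0,∞)`,
then `g t → 0` as `t → ∞`. -/
theorem stmt_5 (g : ℝ → ℝ) (hg : Differentiable ℝ g)
    (hnonneg : ∀ t, 0 ≤ t → 0 ≤ g t)
    (α : ℝ → ℝ) (hαcont : Continuous α) (hαmono : StrictMonoOn α (Set.Ici 0))
    (hα0 : α 0 = 0) (hαnonneg : ∀ r, 0 ≤ r → 0 ≤ α r)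
    (hdec : ∀ t, 0 ≤ t → deriv g t ≤ -α (g t)) :
    Filter.Tendsto g Filter.atTop (nhds 0) :=
  stmt_5_general g hg hnonneg α hαmono hα0 hdec
end
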